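/- Let c = e^{−b/a} with a > 0. The expression II̅(u) = a/u + 2u(a·ln u + b)/(u − c)² − (2a(1 + ln u) + 2b)/(u − c), defined for u > c, satisfies lim_{u → c⁺} II̅(u) = 0. -/

import Mathlib

/-!
Substituting `u = c (1 + x)` and using `a log u + b = a log (1 + x)`, the expression becomes
`(a / c) * (1 / (1 + x) + 2 (log (1 + x) - x) / x ^ 2)`, and
`(log (1 + x) - x) / x ^ 2 → -1/2` as `x → 0` by the second-order Taylor expansion of the logarithm.
-/

open Real Filter Topology

theorem abs_log_one_add_sub_self_add_sq_div_two_le {x : ℝ} (hx : |x| < 1) :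
    |log (1 + x) - x + x ^ 2 / 2| ≤ |x| ^ 3 / (1 - |x|) := by
  have h := abs_log_sub_add_sum_range_le (x := -x) (by rwa [abs_neg]) 2
  simp only [Finset.sum_range_succ, Finset.sum_range_zero, abs_neg, sub_neg_eq_add] at h
  convert h using 2
  push_cast
  ring

theorem tendsto_log_one_add_sub_self_div_sq :
    Tendsto (fun x : ℝ => (log (1 + x) - x) / x ^ 2) (𝓝[≠] 0) (𝓝 (-1 / 2)) := by
  have hbound : Tendsto (fun x : ℝ => |x| / (1 - |x|)) (𝓝 0) (𝓝 0) := by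
    have hcont : ContinuousAt (fun x : ℝ => |x| / (1 - |x|)) 0 :=
      continuous_abs.continuousAt.div (continuous_const.sub continuous_abs).continuousAt
        (by norm_num)
    simpa using hcont.tendsto
  refine tendsto_sub_nhds_zero_iff.1 (squeeze_zero_norm' ?_ (hbound.mono_left nhdsWithin_le_nhds))
  filter_upwards [self_mem_nhdsWithin,
    nhdsWithin_le_nhds (Metric.ball_mem_nhds (0 : ℝ) one_pos)] with x (hx0 : x ≠ 0) hx1
  have hx1 : |x| < 1 := by simpa using hx1
  have hsq : 0 < x ^ 2 := by positivity
  calc ‖(log (1 + x) - x) / x ^ 2 - -1 / 2‖ = |log (1 + x) - x + x ^ 2 / 2| / x ^ 2 := by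
        have : (log (1 + x) - x) / x ^ 2 - -1 / 2 = (log (1 + x) - x + x ^ 2 / 2) / x ^ 2 := by
          field_simp
          ring
        rw [norm_eq_abs, this, abs_div, abs_of_pos hsq]
    _ ≤ |x| ^ 3 / (1 - |x|) / x ^ 2 := by
        gcongr
        exact abs_log_one_add_sub_self_add_sq_div_two_le hx1
    _ = |x| / (1 - |x|) := by
        rw [← sq_abs x]
        field_simp

theorem tendsto_inv_one_add_add_two_mul_log_one_add_sub_self_div_sq :
    Tendsto (fun x : ℝ => (1 + x)⁻¹ + 2 * ((log (1 + x) - x) / x ^ 2)) (𝓝[≠] 0) (𝓝 0) := by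
  have hinv : Tendsto (fun x : ℝ => (1 + x)⁻¹) (𝓝[≠] 0) (𝓝 1) := by
    simpa using ((tendsto_const_nhds.add tendsto_id).inv₀ (by norm_num : (1 : ℝ) + 0 ≠ 0)).mono_left
      (nhdsWithin_le_nhds (a := (0 : ℝ)))
  convert hinv.add (tendsto_log_one_add_sub_self_div_sq.const_mul 2) using 2
  norm_num

theorem tendsto_div_sub_one_nhdsNE {c : ℝ} (hc : c ≠ 0) :
    Tendsto (fun u : ℝ => u / c - 1) (𝓝[≠] c) (𝓝[≠] 0) := by
  refine tendsto_nhdsWithin_iff.2 ⟨?_, ?_⟩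
  · simpa [hc] using ((tendsto_id.div_const c).sub_const 1).mono_left (nhdsWithin_le_nhds (a := c))
  · filter_upwards [self_mem_nhdsWithin] with u (hu : u ≠ c)
    rw [Set.mem_compl_singleton_iff, sub_ne_zero, Ne, div_eq_one_iff_eq hc]
    exact hu

theorem mul_log_add_eq_mul_log_div_exp {a u : ℝ} (b : ℝ) (ha : a ≠ 0) (hu : u ≠ 0) :
    a * log u + b = a * log (u / exp (-b / a)) := by
  rw [log_div hu (exp_pos _).ne', log_exp]
  field_simp
  ring

theorem div_add_mul_log_div_sq_sub_eq {a c u : ℝ} (L : ℝ) (hc : c ≠ 0) (hu : u ≠ 0)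
    (huc : u ≠ c) :
    a / u + 2 * u * (a * L) / (u - c) ^ 2 - (2 * a + 2 * (a * L)) / (u - c)
      = a / c * ((1 + (u / c - 1))⁻¹ + 2 * ((L - (u / c - 1)) / (u / c - 1) ^ 2)) := by
  have huc' : u - c ≠ 0 := sub_ne_zero.2 huc
  rw [add_sub_cancel, div_sub_one hc]
  field_simp
  ring

theorem stmt_6 (a b : ℝ) (ha : 0 < a) :
    Tendsto (fun u : ℝ =>
        a / u + 2 * u * (a * Real.log u + b) / (u - Real.exp (-b / a)) ^ 2
          - (2 * a * (1 + Real.log u) + 2 * b) / (u - Real.exp (-b / a)))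
      (𝓝[>] (Real.exp (-b / a))) (𝓝 0) := by
  set c := exp (-b / a)
  have hc : 0 < c := exp_pos _
  have hlim := (tendsto_inv_one_add_add_two_mul_log_one_add_sub_self_div_sq.comp
    (tendsto_div_sub_one_nhdsNE hc.ne')).const_mul (a / c)
  rw [mul_zero] at hlim
  refine (hlim.mono_left (nhdsWithin_mono _ fun u hu => ne_of_gt hu)).congr' ?_
  filter_upwards [self_mem_nhdsWithin] with u (hu : c < u)
  have hu0 : u ≠ 0 := (hc.trans hu).ne'
  have hlog : a * log u + b = a * log (1 + (u / c - 1)) := by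
    rw [add_sub_cancel, mul_log_add_eq_mul_log_div_exp b ha.ne' hu0]
  rw [show 2 * a * (1 + log u) + 2 * b = 2 * a + 2 * (a * log u + b) by ring, hlog]
  exact (div_add_mul_log_div_sq_sub_eq _ hc.ne' hu0 hu.ne').symm
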